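/- arXiv:1602.01254 — 3 statements merged into one kernel-verified Lean document; each statement's English description precedes it below -/
import Mathlib

section
/- Let x : ℕ → ℝ be a data sequence and, for integers u < v, define the empirical CDF of the segment x_{u+1:v} at t ∈ ℝ by F̂_{u,v}(t) = (1/(v−u))·Σ_{j=u+1}^{v} (1{x_j < t} + (1/2)·1{x_j = t}), and define the nonparametric log-likelihood of the segment at t by ℒ(u,v;t) = (v−u)·(F̂_{u,v}(t)·log F̂_{u,v}(t) + (1−F̂_{u,v}(t))·log(1−F̂_{u,v}(t))), with the convention 0·log 0 = 0. Then for all integers u < v < T and all t ∈ ℝ, ℒ(u,T;t) ≤ ℒ(u,v;t) + ℒ(v,T;t). -/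
/-!
Up to sign, `ℒ(u,v;t)` is `(v − u) · H(F̂_{u,v}(t))` with `H` the binary entropy, and
`F̂_{u,T}(t)` is the average of `F̂_{u,v}(t)` and `F̂_{v,T}(t)` weighted by the segment lengths.
Superadditivity of `−ℒ` is therefore the concavity of `H`.
-/

open Finset

noncomputable def ecdf (x : ℕ → ℝ) (u v : ℕ) (t : ℝ) : ℝ :=
  (1 / ((v : ℝ) - (u : ℝ))) *
    ∑ j ∈ Finset.Ioc u v,
      ((if x j < t then (1 : ℝ) else 0) + (1 / 2) * (if x j = t then (1 : ℝ) else 0))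

/-- The convention `0·log 0 = 0` is automatic since `Real.log 0 = 0`. -/
noncomputable def npll (x : ℕ → ℝ) (u v : ℕ) (t : ℝ) : ℝ :=
  ((v : ℝ) - (u : ℝ)) *
    (ecdf x u v t * Real.log (ecdf x u v t) +
      (1 - ecdf x u v t) * Real.log (1 - ecdf x u v t))

open Real

lemma ConcaveOn.mul_add_mul_le {s : Set ℝ} {f : ℝ → ℝ} (hf : ConcaveOn ℝ s f)
    {a b p q : ℝ} (ha : 0 < a) (hb : 0 < b) (hp : p ∈ s) (hq : q ∈ s) :
    a * f p + b * f q ≤ (a + b) * f ((a * p + b * q) / (a + b)) := by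
  have hab : 0 < a + b := add_pos ha hb
  have h := hf.2 hp hq (div_pos ha hab).le (div_pos hb hab).le (by field_simp)
  simp only [smul_eq_mul] at h
  calc a * f p + b * f q = (a + b) * (a / (a + b) * f p + b / (a + b) * f q) := by
        field_simp
    _ ≤ (a + b) * f (a / (a + b) * p + b / (a + b) * q) := by gcongr
    _ = (a + b) * f ((a * p + b * q) / (a + b)) := by congr 2; field_simp

lemma npll_eq_neg_mul_binEntropy (x : ℕ → ℝ) (u v : ℕ) (t : ℝ) :
    npll x u v t = -(((v : ℝ) - u) * binEntropy (ecdf x u v t)) := by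
  simp only [npll, binEntropy, log_inv]
  ring

lemma sub_mul_ecdf (x : ℕ → ℝ) {u v : ℕ} (huv : u < v) (t : ℝ) :
    ((v : ℝ) - u) * ecdf x u v t = ∑ j ∈ Ioc u v,
      ((if x j < t then (1 : ℝ) else 0) + (1 / 2) * (if x j = t then (1 : ℝ) else 0)) := by
  have : (0 : ℝ) < (v : ℝ) - u := sub_pos.2 (by exact_mod_cast huv)
  rw [ecdf, ← mul_assoc, mul_one_div_cancel this.ne', one_mul]

lemma ecdf_split (x : ℕ → ℝ) {u v T : ℕ} (huv : u < v) (hvT : v < T) (t : ℝ) :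
    ((T : ℝ) - u) * ecdf x u T t
      = ((v : ℝ) - u) * ecdf x u v t + ((T : ℝ) - v) * ecdf x v T t := by
  rw [sub_mul_ecdf x huv, sub_mul_ecdf x hvT, sub_mul_ecdf x (huv.trans hvT),
    sum_Ioc_consecutive _ huv.le hvT.le]

lemma ecdf_term_mem_Icc (y t : ℝ) :
    (if y < t then (1 : ℝ) else 0) + (1 / 2) * (if y = t then (1 : ℝ) else 0)
      ∈ Set.Icc (0 : ℝ) 1 := by
  rcases lt_trichotomy y t with h | rfl | h
  · simp [h, h.ne]
  · norm_num
  · simp [h.not_gt, h.ne']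

lemma ecdf_mem_Icc (x : ℕ → ℝ) {u v : ℕ} (huv : u < v) (t : ℝ) :
    ecdf x u v t ∈ Set.Icc (0 : ℝ) 1 := by
  have hlen : (0 : ℝ) < (v : ℝ) - u := sub_pos.2 (by exact_mod_cast huv)
  have hsum := sub_mul_ecdf x huv t
  constructor
  · refine nonneg_of_mul_nonneg_right ?_ hlen
    rw [hsum]
    exact sum_nonneg fun j _ => (ecdf_term_mem_Icc (x j) t).1
  · refine le_of_mul_le_mul_left ?_ hlen
    rw [hsum, mul_one]
    calc _ ≤ ∑ _j ∈ Ioc u v, (1 : ℝ) := sum_le_sum fun j _ => (ecdf_term_mem_Icc (x j) t).2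
      _ = (v : ℝ) - u := by simp [Nat.cast_sub huv.le]

/-- Superadditivity of minus the nonparametric log-likelihood:
for `u < v < T` and any `t`, `ℒ(u,T;t) ≤ ℒ(u,v;t) + ℒ(v,T;t)`. -/
theorem npll_superadditive (x : ℕ → ℝ) (u v T : ℕ) (huv : u < v) (hvT : v < T)
    (t : ℝ) :
    npll x u T t ≤ npll x u v t + npll x v T t := by
  have ha : (0 : ℝ) < (v : ℝ) - u := sub_pos.2 (by exact_mod_cast huv)
  have hb : (0 : ℝ) < (T : ℝ) - v := sub_pos.2 (by exact_mod_cast hvT)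
  have hlen : ((v : ℝ) - u) + ((T : ℝ) - v) = (T : ℝ) - u := by ring
  have hmix : ecdf x u T t = (((v : ℝ) - u) * ecdf x u v t + ((T : ℝ) - v) * ecdf x v T t)
      / (((v : ℝ) - u) + ((T : ℝ) - v)) := by
    rw [hlen, ← ecdf_split x huv hvT, mul_div_cancel_left₀ _ (by linarith : (0 : ℝ) < T - u).ne']
  have hconc := strictConcave_binEntropy.concaveOn.mul_add_mul_le ha hb
    (ecdf_mem_Icc x huv t) (ecdf_mem_Icc x hvT t)
  rw [← hmix, hlen] at hconc
  simp only [npll_eq_neg_mul_binEntropy]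
  linarith
end

section
/- Let C : ℕ → ℕ → ℝ be a segment cost function that is superadditive in the sense that C(u,T) ≥ C(u,v) + C(v,T) for all integers u < v < T, and let ξ ∈ ℝ be a penalty. For v ≥ 1 define Q(v) as the minimum, over all integers m ≥ 0 and all changepoint vectors 0 = τ₀ < τ₁ < ⋯ < τ_m < τ_{m+1} = v, of Σ_{i=1}^{m+1} (C(τ_{i−1}, τ_i) + ξ). Suppose that at time v there exists u < v with Q(u) + C(u,v) ≥ Q(v). Then for every T > v, Q(u) + C(u,T) + ξ ≥ Q(v) + C(v,T) + ξ; in particular, u can never be the optimal location of the last changepoint prior to any time T > v. -/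
open Finset

/-- The set of penalised costs of all segmentations of the first `v` data points:
costs `Σ_{i=1}^{m+1} (C(τ_{i−1}, τ_i) + ξ)` over all `m ≥ 0` and all changepoint
vectors `0 = τ₀ < τ₁ < ⋯ < τ_m < τ_{m+1} = v`. -/
def segmentationCosts (C : ℕ → ℕ → ℝ) (ξ : ℝ) (v : ℕ) : Set ℝ :=
  {s | ∃ (m : ℕ) (τ : ℕ → ℕ), τ 0 = 0 ∧ τ (m + 1) = v ∧
        (∀ i ≤ m, τ i < τ (i + 1)) ∧
        s = ∑ i ∈ Finset.range (m + 1), (C (τ i) (τ (i + 1)) + ξ)}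

/-- `Q v` is the optimal penalised segmentation cost of the first `v` data points
(for `v ≥ 1`), with `Q 0 = 0`. -/
noncomputable def Qopt (C : ℕ → ℕ → ℝ) (ξ : ℝ) : ℕ → ℝ
  | 0 => 0
  | v + 1 => sInf (segmentationCosts C ξ (v + 1))

/-- The PELT pruning theorem (Theorem 1 of the paper): if the segment cost `C` is
superadditive, i.e. `C(u,T) ≥ C(u,v) + C(v,T)` for all `u < v < T`, and at time `v`
there exists `u < v` with `Q(u) + C(u,v) ≥ Q(v)`, then for every future time `T > v`
we have `Q(u) + C(u,T) + ξ ≥ Q(v) + C(v,T) + ξ`; in particular `u` can never be the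
optimal location of the last changepoint prior to `T`. -/
theorem pelt_pruning (C : ℕ → ℕ → ℝ) (ξ : ℝ)
    (hC : ∀ u v T : ℕ, u < v → v < T → C u v + C v T ≤ C u T)
    (u v : ℕ) (huv : u < v)
    (hprune : Qopt C ξ v ≤ Qopt C ξ u + C u v) :
    ∀ T : ℕ, v < T →
      Qopt C ξ v + C v T + ξ ≤ Qopt C ξ u + C u T + ξ := by
  intro T hT
  calc Qopt C ξ v + C v T + ξ ≤ Qopt C ξ u + C u v + C v T + ξ := by linarith
    _ ≤ Qopt C ξ u + C u T + ξ := by linarith [hC u v T huv hT]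
end

section
/- Let C : ℕ → ℕ → ℝ be a segment cost function and let ξ ∈ ℝ be a penalty. For v ≥ 1 define Q(v) as the minimum, over all integers m ≥ 0 and all changepoint vectors 0 = τ₀ < τ₁ < ⋯ < τ_m < τ_{m+1} = v, of Σ_{i=1}^{m+1} (C(τ_{i−1}, τ_i) + ξ), and set Q(0) = 0. Then Q satisfies the dynamic programming recursion Q(v) = min_{0 ≤ u < v} ( Q(u) + C(u,v) + ξ ) for every v ≥ 1. -/
/-!
A segmentation of the first `v` points is determined by its last changepoint `u < v`
together with a segmentation of the first `u` points (the empty one when `u = 0`), and its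
cost is that of the prefix plus `C u v + ξ`. So the segmentation costs of `v` are the union
over `u < v` of translates of the prefix costs of `u`. By strong induction these sets are
finite, so every infimum involved is a minimum, and the infimum of the union of translates
is the minimum over `u` of `Q u + C u v + ξ`.
-/

open Finset

namespace Qopt

variable (C : ℕ → ℕ → ℝ) (ξ : ℝ)

/-- `{0}`, the cost of the empty segmentation, at `u = 0`; this lets the last changepoint
`u = 0` be treated like any other. -/
def prefixCosts (u : ℕ) : Set ℝ :=
  if u = 0 then {0} else segmentationCosts C ξ u

theorem zero_mem_prefixCosts_zero : (0 : ℝ) ∈ prefixCosts C ξ 0 := by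
  simp [prefixCosts]

variable {C ξ}

theorem prefixCosts_of_ne_zero {u : ℕ} (hu : u ≠ 0) :
    prefixCosts C ξ u = segmentationCosts C ξ u :=
  if_neg hu

theorem eq_sInf_prefixCosts (u : ℕ) : Qopt C ξ u = sInf (prefixCosts C ξ u) := by
  cases u with
  | zero => simp [Qopt, prefixCosts]
  | succ u => rw [prefixCosts_of_ne_zero u.succ_ne_zero]; rfl

theorem add_mem_segmentationCosts {u v : ℕ} {t : ℝ} (ht : t ∈ prefixCosts C ξ u)
    (huv : u < v) : t + (C u v + ξ) ∈ segmentationCosts C ξ v := by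
  unfold prefixCosts at ht
  split_ifs at ht with hu
  · subst hu
    rw [Set.mem_singleton_iff.mp ht, zero_add]
    refine ⟨0, fun i => if i = 0 then 0 else v, rfl, rfl, ?_, by simp⟩
    simpa using huv
  · obtain ⟨m, τ, h0, hend, hlt, rfl⟩ := ht
    set τ' : ℕ → ℕ := fun i => if i ≤ m + 1 then τ i else v
    have hτ : ∀ i ≤ m + 1, τ' i = τ i := fun i hi => if_pos hi
    have hτ_last : τ' (m + 2) = v := if_neg (by omega)
    refine ⟨m + 1, τ', by rw [hτ 0 (by omega), h0], hτ_last, ?_, ?_⟩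
    · intro i hi
      rcases Nat.lt_or_ge i (m + 1) with hi' | hi'
      · rw [hτ i (by omega), hτ (i + 1) hi']
        exact hlt i (by omega)
      · obtain rfl : i = m + 1 := by omega
        rw [hτ (m + 1) le_rfl, hend, hτ_last]
        exact huv
    · rw [Finset.sum_range_succ _ (m + 1), hτ (m + 1) le_rfl, hend, hτ_last]
      congr 1
      refine Finset.sum_congr rfl fun i hi => ?_
      rw [Finset.mem_range] at hi
      rw [hτ i (by omega), hτ (i + 1) (by omega)]

theorem exists_last_changepoint {v : ℕ} {s : ℝ} (hs : s ∈ segmentationCosts C ξ v) :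
    ∃ u < v, ∃ t ∈ prefixCosts C ξ u, s = t + (C u v + ξ) := by
  obtain ⟨m, τ, h0, hend, hlt, rfl⟩ := hs
  cases m with
  | zero =>
    refine ⟨0, ?_, 0, zero_mem_prefixCosts_zero C ξ, ?_⟩
    · simpa [h0, hend] using hlt 0 le_rfl
    · simp [h0, hend]
  | succ m =>
    have hlast := hlt (m + 1) le_rfl
    have hpos : τ (m + 1) ≠ 0 := by have := hlt m (by omega); omega
    refine ⟨τ (m + 1), hend ▸ hlast, _, ?_, by rw [Finset.sum_range_succ, hend]⟩
    rw [prefixCosts_of_ne_zero hpos]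
    exact ⟨m, τ, h0, rfl, fun i hi => hlt i (by omega), rfl⟩

theorem segmentationCosts_nonempty {v : ℕ} (hv : 0 < v) : (segmentationCosts C ξ v).Nonempty :=
  ⟨_, add_mem_segmentationCosts (zero_mem_prefixCosts_zero C ξ) hv⟩

theorem prefixCosts_nonempty (u : ℕ) : (prefixCosts C ξ u).Nonempty := by
  rcases Nat.eq_zero_or_pos u with rfl | hu
  · exact ⟨0, zero_mem_prefixCosts_zero C ξ⟩
  · rw [prefixCosts_of_ne_zero hu.ne']
    exact segmentationCosts_nonempty hu

theorem prefixCosts_finite (v : ℕ) : (prefixCosts C ξ v).Finite := by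
  induction v using Nat.strong_induction_on with
  | _ v ih =>
    rcases Nat.eq_zero_or_pos v with rfl | hv
    · simp [prefixCosts]
    rw [prefixCosts_of_ne_zero hv.ne']
    refine Set.Finite.subset
      ((Set.finite_Iio v).biUnion fun u hu => (ih u hu).image (· + (C u v + ξ))) ?_
    intro s hs
    obtain ⟨u, huv, t, ht, rfl⟩ := exists_last_changepoint hs
    exact Set.mem_biUnion huv ⟨t, ht, rfl⟩

theorem le_of_mem_prefixCosts {u : ℕ} {t : ℝ} (ht : t ∈ prefixCosts C ξ u) : Qopt C ξ u ≤ t :=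
  eq_sInf_prefixCosts u ▸ csInf_le (prefixCosts_finite u).bddBelow ht

theorem le_add_of_lt {u v : ℕ} (huv : u < v) : Qopt C ξ v ≤ Qopt C ξ u + C u v + ξ := by
  suffices Qopt C ξ v - (C u v + ξ) ≤ Qopt C ξ u by linarith
  rw [eq_sInf_prefixCosts u]
  refine le_csInf (prefixCosts_nonempty u) fun t ht => ?_
  have hmem := add_mem_segmentationCosts ht huv
  rw [← prefixCosts_of_ne_zero (by omega)] at hmem
  linarith [le_of_mem_prefixCosts hmem]

end Qopt

open Qopt in
/-- The Optimal Partitioning / PELT dynamic programming recursion: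
`Q(v) = min_{0 ≤ u < v} ( Q(u) + C(u,v) + ξ )` for every `v ≥ 1`. -/
theorem Qopt_recursion (C : ℕ → ℕ → ℝ) (ξ : ℝ) (v : ℕ) (hv : 1 ≤ v) :
    Qopt C ξ v =
      (Finset.range v).inf' (Finset.nonempty_range_iff.mpr (by omega))
        (fun u => Qopt C ξ u + C u v + ξ) := by
  refine le_antisymm (Finset.le_inf' _ _ fun u hu => le_add_of_lt (Finset.mem_range.mp hu)) ?_
  rw [eq_sInf_prefixCosts, prefixCosts_of_ne_zero (by omega)]
  refine le_csInf (segmentationCosts_nonempty hv) fun s hs => ?_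
  obtain ⟨u, hu, t, ht, rfl⟩ := exists_last_changepoint hs
  calc _ ≤ Qopt C ξ u + C u v + ξ := Finset.inf'_le _ (Finset.mem_range.mpr hu)
    _ ≤ t + (C u v + ξ) := by linarith [le_of_mem_prefixCosts ht]
end
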